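/- Let T ∈ (0,1], M ∈ (−1,1) with T = 1 − M². Define h(λ) = 4√T·φ(Mλ/√T) + 2Mλ·erf(Mλ/√(2T)) + 2λM², where φ is the standard Gaussian density. Then the infimum of h over λ ∈ ℝ is at most 4√T·φ(√2·erf⁻¹(M)), attained at λ = −√(2T)·erf⁻¹(M)/M (when M ≠ 0). -/

import Mathlib

/-- The Gauss error function `erf x = (2/√π) ∫₀ˣ e^{-t²} dt`. -/
noncomputable def erf (x : ℝ) : ℝ :=
  (2 / Real.sqrt Real.pi) * ∫ t in (0 : ℝ)..x, Real.exp (-t ^ 2)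

/-- The standard Gaussian density. -/
noncomputable def gaussPhi (z : ℝ) : ℝ := (1 / Real.sqrt (2 * Real.pi)) * Real.exp (-z ^ 2 / 2)

/-! At `λ* = -√(2T)·y/M` with `erf y = M` one has `Mλ*/√T = -√2·y` and `Mλ*/√(2T) = -y`, so
the two linear terms of `h` cancel by the oddness of `erf` and only the Gaussian term survives.
For `M = 0` the function `h` is the constant `4√T·φ(0)`. Since that value is nonnegative, it
bounds the infimum even when `h` is unbounded below (where Lean's `⨅` is `0`). -/

lemma Real.iInf_le_of_le_of_nonneg {ι : Sort*} {f : ι → ℝ} {a : ℝ} (i : ι) (hi : f i ≤ a)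
    (ha : 0 ≤ a) : ⨅ i, f i ≤ a := by
  by_cases hf : BddBelow (Set.range f)
  · exact ciInf_le_of_le hf i hi
  · rwa [Real.iInf_of_not_bddBelow hf]

lemma erf_neg (x : ℝ) : erf (-x) = -erf x := by
  have h := intervalIntegral.integral_comp_neg (a := 0) (b := x) (fun t => Real.exp (-t ^ 2))
  simp only [neg_sq, neg_zero] at h
  rw [erf, erf, h, intervalIntegral.integral_symm, mul_neg]

lemma erf_pos {x : ℝ} (hx : 0 < x) : 0 < erf x := by
  have hcont : Continuous fun t : ℝ => Real.exp (-t ^ 2) := by fun_prop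
  exact mul_pos (by positivity) <| intervalIntegral.intervalIntegral_pos_of_pos_on
    (hcont.intervalIntegrable 0 x) (fun _ _ => Real.exp_pos _) hx

lemma erf_eq_zero_iff {x : ℝ} : erf x = 0 ↔ x = 0 := by
  refine ⟨fun hx => ?_, fun hx => by simp [hx, erf]⟩
  rcases lt_trichotomy x 0 with hneg | hzero | hpos
  · have := erf_pos (neg_pos.mpr hneg)
    rw [erf_neg, hx] at this
    linarith
  · exact hzero
  · linarith [erf_pos hpos]

lemma gaussPhi_neg (z : ℝ) : gaussPhi (-z) = gaussPhi z := by
  simp only [gaussPhi, neg_sq]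

lemma gaussPhi_nonneg (z : ℝ) : 0 ≤ gaussPhi z := by
  unfold gaussPhi
  positivity

noncomputable def objective (T M lam : ℝ) : ℝ :=
  4 * Real.sqrt T * gaussPhi (M * lam / Real.sqrt T) +
    2 * M * lam * erf (M * lam / Real.sqrt (2 * T)) + 2 * lam * M ^ 2

lemma objective_of_M_eq_zero (T lam : ℝ) :
    objective T 0 lam = 4 * Real.sqrt T * gaussPhi 0 := by
  simp [objective]

lemma objective_at_critical {T M y : ℝ} (hT : 0 < T) (hM : M ≠ 0) (hy : erf y = M) :
    objective T M (-Real.sqrt (2 * T) * y / M) = 4 * Real.sqrt T * gaussPhi (Real.sqrt 2 * y) := by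
  have hsT : 0 < Real.sqrt T := Real.sqrt_pos.mpr hT
  have hs2T : Real.sqrt (2 * T) = Real.sqrt 2 * Real.sqrt T := Real.sqrt_mul zero_le_two T
  have hφ : M * (-Real.sqrt (2 * T) * y / M) / Real.sqrt T = -(Real.sqrt 2 * y) := by
    rw [hs2T]; field_simp
  have herf : M * (-Real.sqrt (2 * T) * y / M) / Real.sqrt (2 * T) = -y := by
    rw [hs2T]; field_simp
  rw [objective, hφ, herf, erf_neg, hy, gaussPhi_neg]
  ring

theorem stmt_12_general (T M : ℝ) (hT : T ∈ Set.Ioc (0 : ℝ) 1)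
    (y : ℝ) (hy : erf y = M)
    (h : ℝ → ℝ)
    (hh : ∀ lam, h lam = 4 * Real.sqrt T * gaussPhi (M * lam / Real.sqrt T) +
      2 * M * lam * erf (M * lam / Real.sqrt (2 * T)) + 2 * lam * M ^ 2) :
    (⨅ lam : ℝ, h lam) ≤ 4 * Real.sqrt T * gaussPhi (Real.sqrt 2 * y) ∧
      (M ≠ 0 → h (-(Real.sqrt (2 * T)) * y / M) = 4 * Real.sqrt T * gaussPhi (Real.sqrt 2 * y)) := by
  have hcrit : M ≠ 0 → h (-(Real.sqrt (2 * T)) * y / M) =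
      4 * Real.sqrt T * gaussPhi (Real.sqrt 2 * y) :=
    fun hM => (hh _).trans (objective_at_critical hT.1 hM hy)
  refine ⟨?_, hcrit⟩
  have hval : 0 ≤ 4 * Real.sqrt T * gaussPhi (Real.sqrt 2 * y) :=
    mul_nonneg (by positivity) (gaussPhi_nonneg _)
  by_cases hM : M = 0
  · subst hM
    have hy0 : y = 0 := erf_eq_zero_iff.mp hy
    refine Real.iInf_le_of_le_of_nonneg 0 ?_ hval
    rw [(hh 0).trans (objective_of_M_eq_zero T 0), hy0, mul_zero]
  · exact Real.iInf_le_of_le_of_nonneg _ (hcrit hM).le hval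

theorem stmt_12 (T M : ℝ) (hT : T ∈ Set.Ioc (0 : ℝ) 1) (hM : M ∈ Set.Ioo (-1 : ℝ) 1)
    (hTM : T = 1 - M ^ 2) (y : ℝ) (hy : erf y = M)
    (h : ℝ → ℝ)
    (hh : ∀ lam, h lam = 4 * Real.sqrt T * gaussPhi (M * lam / Real.sqrt T) +
      2 * M * lam * erf (M * lam / Real.sqrt (2 * T)) + 2 * lam * M ^ 2) :
    (⨅ lam : ℝ, h lam) ≤ 4 * Real.sqrt T * gaussPhi (Real.sqrt 2 * y) ∧
      (M ≠ 0 → h (-(Real.sqrt (2 * T)) * y / M) = 4 * Real.sqrt T * gaussPhi (Real.sqrt 2 * y)) :=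
  stmt_12_general T M hT y hy h hh
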